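/- Let q be a real number with 0 < q < 1, and for each m ∈ ℕ set σ_m := ∑_{k=0}^{m} binom_q(m,k)·(−1)^{m−k} (that is, σ_m = (1 ⊖_q 1)^m). Then for every complex x with |x| < 1/(1−q), the series cos_q(x(1 ⊖_q 1)) := ∑_{n=0}^{∞} (−1)^n σ_{2n} x^{2n}/[2n]_q! converges and cos_q(x)² + sin_q(x)² = cos_q(x(1 ⊖_q 1)). -/

import Mathlib

open Filter Topology

/-- The `q`-basic number `[n]_q = (1 - q^n)/(1 - q)`. -/
noncomputable def qNum (q : ℝ) (n : ℕ) : ℝ := (1 - q ^ n) / (1 - q)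

/-- The `q`-factorial `[n]_q! = [1]_q [2]_q ⋯ [n]_q`, with `[0]_q! = 1`. -/
noncomputable def qFact (q : ℝ) (n : ℕ) : ℝ := ∏ j ∈ Finset.range n, qNum q (j + 1)

/-- The Gaussian binomial coefficient `[n]_q! / ([k]_q! [n-k]_q!)`. -/
noncomputable def qBinom (q : ℝ) (n k : ℕ) : ℝ := qFact q n / (qFact q k * qFact q (n - k))

/-- The `q`-exponential `e_q(z) = ∑ z^n / [n]_q!`. -/
noncomputable def qExp (q : ℝ) (z : ℂ) : ℂ := ∑' n : ℕ, z ^ n / (qFact q n : ℂ)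

/-- The `q`-sine `sin_q(z) = ∑ (-1)^n z^(2n+1) / [2n+1]_q!`. -/
noncomputable def qSin (q : ℝ) (z : ℂ) : ℂ :=
  ∑' n : ℕ, (-1 : ℂ) ^ n * z ^ (2 * n + 1) / (qFact q (2 * n + 1) : ℂ)

/-- The `q`-cosine `cos_q(z) = ∑ (-1)^n z^(2n) / [2n]_q!`. -/
noncomputable def qCos (q : ℝ) (z : ℂ) : ℂ :=
  ∑' n : ℕ, (-1 : ℂ) ^ n * z ^ (2 * n) / (qFact q (2 * n) : ℂ)

/-- The `q`-addition power `(x ⊕_q y)^n = ∑_{k=0}^n binom_q(n,k) x^k y^(n-k)`. -/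
noncomputable def qAddPow (q : ℝ) (x y : ℂ) (n : ℕ) : ℂ :=
  ∑ k ∈ Finset.range (n + 1), (qBinom q n k : ℂ) * x ^ k * y ^ (n - k)

/-- The `q`-subtraction power `(x ⊖_q y)^n = ∑_{k=0}^n binom_q(n,k) (-1)^(n-k) x^k y^(n-k)`. -/
noncomputable def qSubPow (q : ℝ) (x y : ℂ) (n : ℕ) : ℂ :=
  ∑ k ∈ Finset.range (n + 1), (qBinom q n k : ℂ) * (-1 : ℂ) ^ (n - k) * x ^ k * y ^ (n - k)

/-- The `q`-tangent `tan_q(z) = sin_q(z)/cos_q(z)`. -/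
noncomputable def qTan (q : ℝ) (z : ℂ) : ℂ := qSin q z / qCos q z

/-- The second `q`-exponential `E_q(z) = ∑ q^(n(n-1)/2) z^n / [n]_q!`. -/
noncomputable def qExpE (q : ℝ) (z : ℂ) : ℂ :=
  ∑' n : ℕ, (q : ℂ) ^ (n * (n - 1) / 2) * z ^ n / (qFact q n : ℂ)

/-!
For `c = ±i` we have `c² = -1`, so splitting `e_q(c x) = ∑ (c x)ⁿ / [n]_q!` into even and odd
terms gives `e_q(±i x) = cos_q x ± i sin_q x`, whence `cos_q(x)² + sin_q(x)² = e_q(i x) e_q(-i x)`.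
The Cauchy product of the two `q`-exponentials has `n`-th term
`(i x ⊕_q (-i x))ⁿ / [n]_q! = (i x)ⁿ (1 ⊖_q 1)ⁿ / [n]_q!`, and `(1 ⊖_q 1)ⁿ` vanishes for odd `n`
because the Gaussian binomial coefficients are symmetric, which leaves exactly the even-indexed
series of the statement.
-/

open Complex

section qCalculus

variable {q : ℝ}

lemma qNum_succ_pos (hq : |q| < 1) (n : ℕ) : 0 < qNum q (n + 1) := by
  have hpow : q ^ (n + 1) < 1 :=
    (le_abs_self _).trans_lt (by rw [abs_pow]; exact pow_lt_one₀ (abs_nonneg q) hq n.succ_ne_zero)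
  exact div_pos (by linarith) (by linarith [(abs_lt.1 hq).2])

lemma qFact_pos (hq : |q| < 1) (n : ℕ) : 0 < qFact q n :=
  Finset.prod_pos fun j _ => qNum_succ_pos hq j

lemma qFact_succ (n : ℕ) : qFact q (n + 1) = qFact q n * qNum q (n + 1) :=
  Finset.prod_range_succ _ _

lemma qBinom_symm {n k : ℕ} (hk : k ≤ n) : qBinom q n (n - k) = qBinom q n k := by
  rw [qBinom, qBinom, Nat.sub_sub_self hk, mul_comm]

lemma tendsto_inv_qNum (hq : |q| < 1) : Tendsto (fun n => (qNum q n)⁻¹) atTop (𝓝 (1 - q)) := by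
  have h : Tendsto (fun n : ℕ => (1 - q) / (1 - q ^ n)) atTop (𝓝 ((1 - q) / (1 - 0))) :=
    tendsto_const_nhds.div (tendsto_const_nhds.sub (tendsto_pow_atTop_nhds_zero_of_abs_lt_one hq))
      (by norm_num)
  simpa [qNum] using h

lemma pow_succ_div_qFact_succ (z : ℂ) (n : ℕ) :
    z ^ (n + 1) / (qFact q (n + 1) : ℂ) = z ^ n / (qFact q n : ℂ) * (z / (qNum q (n + 1) : ℂ)) := by
  rw [qFact_succ, Complex.ofReal_mul, pow_succ, mul_div_mul_comm]

lemma summable_norm_pow_div_qFact (hq : |q| < 1) {z : ℂ} (hz : ‖z‖ < 1 / (1 - q)) :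
    Summable fun n => ‖z ^ n / (qFact q n : ℂ)‖ := by
  have hlim : ‖z‖ * (1 - q) < 1 := by
    rwa [← lt_div_iff₀ (by linarith [(abs_lt.1 hq).2])]
  obtain ⟨r, hzr, hr⟩ := exists_between hlim
  refine summable_of_ratio_norm_eventually_le hr ?_
  have hratio := ((tendsto_inv_qNum hq).comp (tendsto_add_atTop_nat 1)).const_mul ‖z‖
  filter_upwards [hratio.eventually (gt_mem_nhds hzr)] with n hn
  rw [norm_norm, norm_norm, pow_succ_div_qFact_succ, norm_mul, mul_comm r]
  gcongr
  rw [norm_div, norm_real, Real.norm_of_nonneg (qNum_succ_pos hq n).le, div_eq_mul_inv]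
  exact hn.le

lemma sum_range_pow_div_qFact_mul (hq : |q| < 1) (y w : ℂ) (n : ℕ) :
    ∑ k ∈ Finset.range (n + 1), y ^ k / (qFact q k : ℂ) * (w ^ (n - k) / (qFact q (n - k) : ℂ))
      = qAddPow q y w n / (qFact q n : ℂ) := by
  have hF : ∀ m, (qFact q m : ℂ) ≠ 0 := fun m => ofReal_ne_zero.2 (qFact_pos hq m).ne'
  rw [qAddPow, Finset.sum_div]
  refine Finset.sum_congr rfl fun k _ => ?_
  rw [qBinom, ofReal_div, ofReal_mul]
  field_simp [hF]

lemma hasSum_qAddPow_div_qFact (hq : |q| < 1) {y w : ℂ}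
    (hy : Summable fun n => ‖y ^ n / (qFact q n : ℂ)‖)
    (hw : Summable fun n => ‖w ^ n / (qFact q n : ℂ)‖) :
    HasSum (fun n => qAddPow q y w n / (qFact q n : ℂ)) (qExp q y * qExp q w) := by
  simpa only [qExp, sum_range_pow_div_qFact_mul hq] using hasSum_sum_range_mul_of_summable_norm hy hw

lemma hasSum_qCos_add_mul_qSin {c x : ℂ} (hc : c ^ 2 = -1)
    (hs : Summable fun n => (c * x) ^ n / (qFact q n : ℂ)) :
    HasSum (fun n => (c * x) ^ n / (qFact q n : ℂ)) (qCos q x + c * qSin q x) := by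
  have heven : ∀ n, (c * x) ^ (2 * n) / (qFact q (2 * n) : ℂ)
      = (-1 : ℂ) ^ n * x ^ (2 * n) / (qFact q (2 * n) : ℂ) := fun n => by
    rw [mul_pow, pow_mul, hc]
  have hodd : ∀ n, (c * x) ^ (2 * n + 1) / (qFact q (2 * n + 1) : ℂ)
      = c * ((-1 : ℂ) ^ n * x ^ (2 * n + 1) / (qFact q (2 * n + 1) : ℂ)) := fun n => by
    rw [mul_pow, pow_succ c, pow_mul, hc]; ring
  refine HasSum.even_add_odd ?_ ?_
  · have h := (hs.comp_injective (mul_right_injective₀ two_ne_zero)).hasSum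
    simpa only [qCos, Function.comp_def, heven] using h
  · have h := (hs.comp_injective
      ((add_left_injective 1).comp (mul_right_injective₀ two_ne_zero))).hasSum
    simp only [Function.comp_def, hodd] at h ⊢
    rwa [tsum_mul_left, ← qSin] at h

lemma qSubPow_comm (x y : ℂ) (n : ℕ) : qSubPow q y x n = (-1) ^ n * qSubPow q x y n := by
  rw [qSubPow, ← Finset.sum_range_reflect, qSubPow, Finset.mul_sum]
  refine Finset.sum_congr rfl fun k hk => ?_
  have hk : k ≤ n := Nat.lt_succ_iff.1 (Finset.mem_range.1 hk)
  rw [Nat.add_sub_cancel, qBinom_symm hk, Nat.sub_sub_self hk]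
  have hsign : (-1 : ℂ) ^ n * (-1) ^ (n - k) = (-1) ^ k := by
    rw [← pow_mul_pow_sub (-1 : ℂ) hk, mul_assoc, ← mul_pow, neg_one_mul, neg_neg, one_pow,
      mul_one]
  rw [← hsign]
  ring

lemma qSubPow_one_one_odd (n : ℕ) : qSubPow q 1 1 (2 * n + 1) = 0 := by
  have h := qSubPow_comm (q := q) 1 1 (2 * n + 1)
  rw [pow_succ, pow_mul] at h
  norm_num at h
  linear_combination h / 2

lemma qAddPow_self_neg (y : ℂ) (n : ℕ) : qAddPow q y (-y) n = y ^ n * qSubPow q 1 1 n := by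
  rw [qAddPow, qSubPow, Finset.mul_sum]
  refine Finset.sum_congr rfl fun k hk => ?_
  rw [neg_pow, ← pow_mul_pow_sub y (Nat.lt_succ_iff.1 (Finset.mem_range.1 hk))]
  ring

end qCalculus

/-- `cos_q(x)² + sin_q(x)² = cos_q(x (1 ⊖_q 1))`, where the right-hand series is
`∑ (-1)^n (1 ⊖_q 1)^{2n} x^{2n} / [2n]_q!`. -/
theorem qCos_sq_add_qSin_sq (q : ℝ) (hq0 : 0 < q) (hq1 : q < 1) (x : ℂ)
    (hx : ‖x‖ < 1 / (1 - q)) :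
    HasSum
      (fun n : ℕ => (-1 : ℂ) ^ n * qSubPow q 1 1 (2 * n) * x ^ (2 * n) / (qFact q (2 * n) : ℂ))
      (qCos q x ^ 2 + qSin q x ^ 2) := by
  have hq : |q| < 1 := abs_lt.2 ⟨by linarith, hq1⟩
  have hs : ∀ c : ℂ, ‖c‖ = 1 → Summable fun n => ‖(c * x) ^ n / (qFact q n : ℂ)‖ :=
    fun c hc => summable_norm_pow_div_qFact hq (by rwa [norm_mul, hc, one_mul])
  have hexp : ∀ c : ℂ, c ^ 2 = -1 → ‖c‖ = 1 → qExp q (c * x) = qCos q x + c * qSin q x :=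
    fun c hc hc' => (hasSum_qCos_add_mul_qSin hc (hs c hc').of_norm).tsum_eq
  have hprod := hasSum_qAddPow_div_qFact hq (hs I norm_I) (hs (-I) (by simp))
  rw [hexp I I_sq norm_I, hexp (-I) (by simp) (by simp), neg_mul] at hprod
  simp only [qAddPow_self_neg] at hprod
  rw [← (mul_right_injective₀ two_ne_zero).hasSum_iff] at hprod
  · convert hprod using 1
    · funext n
      simp only [Function.comp_apply, mul_pow, pow_mul, I_sq]
      ring
    · linear_combination (qSin q x) ^ 2 * I_sq
  · intro n hn
    obtain ⟨k, rfl | rfl⟩ := Nat.even_or_odd' n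
    · exact absurd ⟨k, rfl⟩ hn
    · rw [qSubPow_one_one_odd, mul_zero, zero_div]
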